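/- Let η and ℓ be non-negative integers, let G be a graph, and let S ⊆ V(G) with td(G[S]) ≤ η. If S is ℓ-nearly clique separated in G, then |Z ∩ S| ≤ η + ℓ for any minimum-size treedepth-η modulator Z of G. -/

import Mathlib

/-- A rooted forest on the vertex type `V`, given by a parent function.
Acyclicity guarantees that following parents never returns to a vertex. -/
structure RootedForest (V : Type*) where
  parent : V → Option V
  acyclic : ∀ v : V, ¬ Relation.TransGen (fun a b => parent a = some b) v v

namespace RootedForest

variable {V : Type*} (F : RootedForest V)

/-- `F.Anc x y` means that `y` is an ancestor of `x` in the rooted forest `F`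
(every vertex is an ancestor of itself). -/
def Anc (x y : V) : Prop :=
  Relation.ReflTransGen (fun a b => F.parent a = some b) x y

/-- `F.ProperAnc x y` means that `y` is a proper ancestor of `x`. -/
def ProperAnc (x y : V) : Prop :=
  Relation.TransGen (fun a b => F.parent a = some b) x y

/-- `x` and `y` are in ancestor–descendant relation in `F`. -/
def AncDesc (x y : V) : Prop := F.Anc x y ∨ F.Anc y x

/-- The depth of `v` in `F`: the number of vertices on the path from `v`
to the root of its tree (including both endpoints). -/
noncomputable def depth (v : V) : ℕ := Nat.card {u : V // F.Anc v u}

/-- The height of the forest: the maximum depth of a vertex. -/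
noncomputable def height : ℕ := sSup (Set.range F.depth)

/-- The reach of `v` in `F`. -/
noncomputable def reach (v : V) : ℕ := F.height - F.depth v

/-- The vertex set of the subtree of `F` rooted at `v` (all descendants of `v`,
including `v` itself). -/
def subtree (v : V) : Set V := {u : V | F.Anc u v}

/-- `x` and `y` lie in the same tree of the forest, i.e. they have a common ancestor. -/
def SameTree (x y : V) : Prop := ∃ w : V, F.Anc x w ∧ F.Anc y w

end RootedForest

/-- `F` is a treedepth decomposition of `G`: a rooted forest on the vertex set of `G`
such that the endpoints of every edge are in ancestor–descendant relation. -/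
def SimpleGraph.IsTreedepthDecomp {V : Type*} (G : SimpleGraph V) (F : RootedForest V) : Prop :=
  ∀ ⦃u v : V⦄, G.Adj u v → F.AncDesc u v

/-- The treedepth of `G`: the minimum height of a treedepth decomposition of `G`. -/
noncomputable def SimpleGraph.treedepth {V : Type*} (G : SimpleGraph V) : ℕ :=
  sInf {n : ℕ | ∃ F : RootedForest V, G.IsTreedepthDecomp F ∧ F.height = n}

/-- The open neighborhood of a vertex set `S`: all vertices outside `S`
with a neighbor in `S`. -/
def SimpleGraph.nbhdSet {V : Type*} (G : SimpleGraph V) (S : Set V) : Set V :=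
  {u : V | u ∉ S ∧ ∃ s ∈ S, G.Adj u s}

/-- `Z` is a treedepth-`η` modulator of `G`: removing `Z` leaves a graph of
treedepth at most `η`. -/
def SimpleGraph.IsTdMod {V : Type*} (G : SimpleGraph V) (η : ℕ) (Z : Set V) : Prop :=
  (G.induce Zᶜ).treedepth ≤ η

/-- `G` contains `m` pairwise internally vertex-disjoint paths between `u` and `v`. -/
def IntDisjointPaths {V : Type*} (G : SimpleGraph V) (u v : V) (m : ℕ) : Prop :=
  ∃ P : Fin m → G.Walk u v, (∀ i, (P i).IsPath) ∧
    ∀ i j, i ≠ j → ∀ w, w ∈ (P i).support → w ∈ (P j).support → w = u ∨ w = v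

/-- A treedepth decomposition is nice if every subtree induces a connected subgraph. -/
def IsNiceDecomp {V : Type*} (G : SimpleGraph V) (F : RootedForest V) : Prop :=
  ∀ v : V, (G.induce (F.subtree v)).Connected

/-!
Swap `Z ∩ S` for the neighbours of `S` that are not yet in `Z`, giving `Z' = (Z \ S) ∪ N(S)`.
In `G - Z'` the set `S` is cut off from the rest, so `G - Z'` embeds into the disjoint union
of `G[S]` and `G - Z`, both of treedepth at most `η`. The swap adds at most `|Q| ≤ ℓ` vertices
plus the vertices of the clique `N(S) \ Q` outside `Z`; a clique lies on one root-to-leaf path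
of any decomposition of `G - Z`, so there are at most `η` of the latter. Minimality of `Z`
gives `|Z ∩ S| ≤ η + ℓ`.
-/

theorem Relation.ReflTransGen.exists_lift {α β : Type*} {r : α → α → Prop} {p : β → β → Prop}
    {f : α → β} (hstep : ∀ a y, p (f a) y → ∃ b, r a b ∧ f b = y) {a : α} {y : β}
    (h : Relation.ReflTransGen p (f a) y) : ∃ b, Relation.ReflTransGen r a b ∧ f b = y := by
  induction h with
  | refl => exact ⟨a, .refl, rfl⟩
  | tail _ hyz ih =>
    obtain ⟨b, hab, rfl⟩ := ih
    obtain ⟨c, hbc, rfl⟩ := hstep b _ hyz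
    exact ⟨c, hab.tail hbc, rfl⟩

theorem Relation.TransGen.exists_lift {α β : Type*} {r : α → α → Prop} {p : β → β → Prop}
    {f : α → β} (hstep : ∀ a y, p (f a) y → ∃ b, r a b ∧ f b = y) {a : α} {y : β}
    (h : Relation.TransGen p (f a) y) : ∃ b, Relation.TransGen r a b ∧ f b = y := by
  obtain ⟨_, hp, hy⟩ := Relation.TransGen.head'_iff.mp h
  obtain ⟨b, hab, rfl⟩ := hstep a _ hp
  obtain ⟨c, hbc, rfl⟩ := hy.exists_lift hstep
  exact ⟨c, Relation.TransGen.head' hab hbc, rfl⟩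

namespace RootedForest

section Basic

variable {V : Type*} {F : RootedForest V} {a b c : V}

theorem Anc.refl (F : RootedForest V) (a : V) : F.Anc a a := Relation.ReflTransGen.refl

theorem Anc.trans (hab : F.Anc a b) (hbc : F.Anc b c) : F.Anc a c :=
  Relation.ReflTransGen.trans hab hbc

theorem ProperAnc.anc (h : F.ProperAnc a b) : F.Anc a b := h.to_reflTransGen

theorem Anc.properAnc_of_ne (h : F.Anc a b) (hne : a ≠ b) : F.ProperAnc a b :=
  (Relation.reflTransGen_iff_eq_or_transGen.mp h).resolve_left hne.symm

theorem Anc.total (hb : F.Anc a b) (hc : F.Anc a c) : F.Anc b c ∨ F.Anc c b := by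
  induction hb using Relation.ReflTransGen.head_induction_on with
  | refl => exact Or.inl hc
  | head hstep hdb ih =>
    rcases Relation.ReflTransGen.cases_head hc with rfl | ⟨d', hstep', hd'c⟩
    · exact Or.inr (Relation.ReflTransGen.head hstep hdb)
    · obtain rfl := Option.some_inj.mp (hstep.symm.trans hstep')
      exact ih hd'c

theorem depth_eq_ncard (F : RootedForest V) (a : V) : F.depth a = {u | F.Anc a u}.ncard :=
  (Nat.card_coe_set_eq _).symm

theorem height_le {n : ℕ} (h : ∀ a, F.depth a ≤ n) : F.height ≤ n :=
  csSup_le' (Set.forall_mem_range.mpr h)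

variable [Finite V]

theorem Anc.depth_le (h : F.Anc a b) : F.depth b ≤ F.depth a := by
  rw [depth_eq_ncard, depth_eq_ncard]
  exact Set.ncard_le_ncard (fun _ hu => h.trans hu) (Set.toFinite _)

theorem Anc.anc_of_depth_le (h : F.Anc a b) (hd : F.depth a ≤ F.depth b) : F.Anc b a := by
  have hsub : {u | F.Anc b u} ⊆ {u | F.Anc a u} := fun _ hu => h.trans hu
  have heq : {u | F.Anc b u} = {u | F.Anc a u} := by
    refine Set.eq_of_subset_of_ncard_le hsub ?_ (Set.toFinite _)
    rwa [← depth_eq_ncard, ← depth_eq_ncard]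
  change a ∈ {u | F.Anc b u}
  rw [heq]
  exact Anc.refl F a

theorem ProperAnc.depth_lt (h : F.ProperAnc a b) : F.depth b < F.depth a := by
  refine h.anc.depth_le.lt_of_ne fun hd => ?_
  exact F.acyclic a (Relation.TransGen.trans_left h (h.anc.anc_of_depth_le hd.ge))

theorem depth_le_height (F : RootedForest V) (a : V) : F.depth a ≤ F.height :=
  le_csSup (Set.finite_range _).bddAbove ⟨a, rfl⟩

end Basic

open Function

section Comap

variable {V W : Type*} [Finite W] (F : RootedForest W) {f : V → W} (hf : Injective f)

open Classical in
noncomputable def comapParent (a : V) : Option V :=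
  if h : {b | F.ProperAnc (f a) (f b)}.Nonempty then
    some (Set.exists_max_image _ (fun b => F.depth (f b))
      ((Set.toFinite {w | F.ProperAnc (f a) w}).preimage hf.injOn) h).choose
  else none

variable {F hf}

theorem comapParent_eq_some {a c : V} (h : F.comapParent hf a = some c) :
    F.ProperAnc (f a) (f c) ∧ ∀ b, F.ProperAnc (f a) (f b) → F.depth (f b) ≤ F.depth (f c) := by
  unfold comapParent at h
  split_ifs at h with hne
  cases h
  exact (Set.exists_max_image _ _ ((Set.toFinite _).preimage hf.injOn) hne).choose_spec

theorem exists_comapParent_eq_some {a b : V} (h : F.ProperAnc (f a) (f b)) :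
    ∃ c, F.comapParent hf a = some c := by
  unfold comapParent
  exact ⟨_, dif_pos ⟨b, h⟩⟩

variable (F hf)

noncomputable def comap : RootedForest V where
  parent := F.comapParent hf
  acyclic a h := F.acyclic (f a) <|
    Relation.TransGen.lift' f (fun _ _ hbc => (comapParent_eq_some hbc).1) a a h

variable {F hf}

theorem Anc.of_comap {a b : V} (h : (F.comap hf).Anc a b) : F.Anc (f a) (f b) :=
  Relation.ReflTransGen.lift' f (fun _ _ hbc => (comapParent_eq_some (hf := hf) hbc).1.anc) a b h

theorem Anc.comap {a b : V} (h : F.Anc (f a) (f b)) : (F.comap hf).Anc a b := by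
  induction hd : F.depth (f a) using Nat.strong_induction_on generalizing a with
  | _ n ih =>
    by_cases hab : a = b
    · exact hab ▸ Anc.refl _ a
    have hprop : F.ProperAnc (f a) (f b) := h.properAnc_of_ne (hf.ne hab)
    obtain ⟨c, hc⟩ := exists_comapParent_eq_some (hf := hf) hprop
    obtain ⟨hac, hmax⟩ := comapParent_eq_some hc
    -- `c` is the deepest ancestor of `a` in the range, so it lies below `b`
    have hcb : F.Anc (f c) (f b) :=
      (hac.anc.total h).elim id fun hbc => hbc.anc_of_depth_le (hmax b hprop)
    exact Relation.ReflTransGen.head hc (ih _ (hd ▸ hac.depth_lt) hcb rfl)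

theorem depth_comap_le (a : V) : (F.comap hf).depth a ≤ F.depth (f a) := by
  rw [depth_eq_ncard, depth_eq_ncard]
  exact Set.ncard_le_ncard_of_injOn f (fun _ hb => Anc.of_comap hb) hf.injOn (Set.toFinite _)

theorem height_comap_le : (F.comap hf).height ≤ F.height :=
  height_le fun a => (depth_comap_le a).trans (F.depth_le_height (f a))

end Comap

section Sum

variable {α β : Type*} (F₁ : RootedForest α) (F₂ : RootedForest β)

def sum : RootedForest (α ⊕ β) where
  parent := Sum.elim (fun a => (F₁.parent a).map Sum.inl) (fun b => (F₂.parent b).map Sum.inr)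
  acyclic
    | .inl a, h => by
      obtain ⟨b, hab, hba⟩ := h.exists_lift (r := fun a b => F₁.parent a = some b)
        (fun _ _ hy => Option.map_eq_some_iff.mp hy)
      exact F₁.acyclic a (Sum.inl_injective hba ▸ hab)
    | .inr a, h => by
      obtain ⟨b, hab, hba⟩ := h.exists_lift (r := fun a b => F₂.parent a = some b)
        (fun _ _ hy => Option.map_eq_some_iff.mp hy)
      exact F₂.acyclic a (Sum.inr_injective hba ▸ hab)

variable {F₁ F₂}

theorem Anc.sum_inl {a b : α} (h : F₁.Anc a b) : (F₁.sum F₂).Anc (.inl a) (.inl b) :=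
  Relation.ReflTransGen.lift Sum.inl (fun _ _ hab => by simp [Function.onFun, sum, hab]) a b h

theorem Anc.sum_inr {a b : β} (h : F₂.Anc a b) : (F₁.sum F₂).Anc (.inr a) (.inr b) :=
  Relation.ReflTransGen.lift Sum.inr (fun _ _ hab => by simp [Function.onFun, sum, hab]) a b h

theorem depth_sum_inl (a : α) : (F₁.sum F₂).depth (.inl a) = F₁.depth a := by
  have hanc : {u | (F₁.sum F₂).Anc (.inl a) u} = Sum.inl '' {b | F₁.Anc a b} := by
    ext u
    refine ⟨fun h => ?_, fun ⟨b, hb, hu⟩ => hu ▸ hb.sum_inl⟩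
    exact Relation.ReflTransGen.exists_lift (fun _ _ hy => Option.map_eq_some_iff.mp hy) h
  rw [depth_eq_ncard, depth_eq_ncard, hanc, Set.ncard_image_of_injective _ Sum.inl_injective]

theorem depth_sum_inr (b : β) : (F₁.sum F₂).depth (.inr b) = F₂.depth b := by
  have hanc : {u | (F₁.sum F₂).Anc (.inr b) u} = Sum.inr '' {a | F₂.Anc b a} := by
    ext u
    refine ⟨fun h => ?_, fun ⟨a, ha, hu⟩ => hu ▸ ha.sum_inr⟩
    exact Relation.ReflTransGen.exists_lift (fun _ _ hy => Option.map_eq_some_iff.mp hy) h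
  rw [depth_eq_ncard, depth_eq_ncard, hanc, Set.ncard_image_of_injective _ Sum.inr_injective]

theorem height_sum_le [Finite α] [Finite β] :
    (F₁.sum F₂).height ≤ max F₁.height F₂.height :=
  height_le fun
    | .inl a => (depth_sum_inl a).trans_le (le_max_of_le_left (F₁.depth_le_height a))
    | .inr b => (depth_sum_inr b).trans_le (le_max_of_le_right (F₂.depth_le_height b))

end Sum

def path (n : ℕ) : RootedForest (Fin n) where
  parent i := if h : i.1 + 1 < n then some ⟨i.1 + 1, h⟩ else none
  acyclic i h := lt_irrefl i <| Relation.transGen_minimal (r' := (· < ·)) (fun j k hjk => by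
    split_ifs at hjk
    cases hjk
    exact Fin.lt_def.mpr (Nat.lt_succ_self _)) i i h

theorem path_anc_of_le {n : ℕ} {i j : Fin n} (h : i ≤ j) : (path n).Anc i j := by
  obtain ⟨k, hk⟩ := Nat.exists_eq_add_of_le (Fin.le_def.mp h)
  induction k generalizing j with
  | zero =>
    obtain rfl : j = i := Fin.ext hk
    exact Anc.refl _ j
  | succ k ih =>
    have hlt : i.1 + k < n := by omega
    refine Relation.ReflTransGen.tail (ih (j := ⟨i.1 + k, hlt⟩) ?_ rfl) ?_
    · exact Fin.le_def.mpr (Nat.le_add_right _ _)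
    · simp only [path, show i.1 + k + 1 < n by omega, dif_pos]
      exact congrArg some (Fin.ext hk.symm)

end RootedForest

namespace SimpleGraph

open RootedForest Function

variable {V W : Type*} {G : SimpleGraph V} {H : SimpleGraph W}

theorem treedepth_le_height {F : RootedForest V} (hF : G.IsTreedepthDecomp F) :
    G.treedepth ≤ F.height :=
  Nat.sInf_le ⟨F, hF, rfl⟩

theorem exists_isTreedepthDecomp [Finite V] (G : SimpleGraph V) :
    ∃ F : RootedForest V, G.IsTreedepthDecomp F := by
  let e := Finite.equivFin V
  refine ⟨(path _).comap e.injective, fun u v _ => ?_⟩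
  rcases le_total (e u) (e v) with h | h
  · exact Or.inl (Anc.comap (path_anc_of_le h))
  · exact Or.inr (Anc.comap (path_anc_of_le h))

theorem exists_isTreedepthDecomp_height_eq [Finite V] (G : SimpleGraph V) :
    ∃ F : RootedForest V, G.IsTreedepthDecomp F ∧ F.height = G.treedepth :=
  have ⟨F, hF⟩ := G.exists_isTreedepthDecomp
  Nat.sInf_mem (s := {n | ∃ F, G.IsTreedepthDecomp F ∧ F.height = n}) ⟨F.height, F, hF, rfl⟩

theorem IsClique.ncard_le_treedepth [Finite V] {K : Set V} (hK : G.IsClique K) :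
    K.ncard ≤ G.treedepth := by
  obtain ⟨F, hF, hheight⟩ := G.exists_isTreedepthDecomp_height_eq
  rcases K.eq_empty_or_nonempty with rfl | hne
  · simp
  -- the deepest vertex of the clique lies below all the others
  obtain ⟨x, hx, hmax⟩ := Set.exists_max_image K F.depth (Set.toFinite K) hne
  have hanc : K ⊆ {u | F.Anc x u} := fun y hy => by
    by_cases hxy : x = y
    · exact hxy ▸ Anc.refl F x
    · exact (hF (hK hx hy hxy)).elim id fun h => h.anc_of_depth_le (hmax y hy)
  calc K.ncard ≤ {u | F.Anc x u}.ncard := Set.ncard_le_ncard hanc (Set.toFinite _)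
    _ = F.depth x := (F.depth_eq_ncard x).symm
    _ ≤ F.height := F.depth_le_height x
    _ = G.treedepth := hheight

theorem treedepth_le_of_injective [Finite W] (f : G →g H) (hf : Injective f) :
    G.treedepth ≤ H.treedepth := by
  obtain ⟨F, hF, hheight⟩ := H.exists_isTreedepthDecomp_height_eq
  have hdecomp : G.IsTreedepthDecomp (F.comap hf) := fun u v huv =>
    (hF (f.map_adj huv)).imp Anc.comap Anc.comap
  exact (treedepth_le_height hdecomp).trans (hheight ▸ height_comap_le)

theorem treedepth_sum_le [Finite V] [Finite W] :
    (G ⊕g H).treedepth ≤ max G.treedepth H.treedepth := by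
  obtain ⟨F₁, hF₁, hheight₁⟩ := G.exists_isTreedepthDecomp_height_eq
  obtain ⟨F₂, hF₂, hheight₂⟩ := H.exists_isTreedepthDecomp_height_eq
  have hdecomp : (G ⊕g H).IsTreedepthDecomp (F₁.sum F₂) := by
    rintro (u | u) (v | v) huv <;> simp only [sum_adj] at huv
    · exact (hF₁ huv).imp Anc.sum_inl Anc.sum_inl
    · exact (hF₂ huv).imp Anc.sum_inr Anc.sum_inr
  exact (treedepth_le_height hdecomp).trans (hheight₁ ▸ hheight₂ ▸ height_sum_le)

variable {η : ℕ} {Z : Set V}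

theorem IsTdMod.ncard_diff_le_of_isClique [Finite V] (hZ : G.IsTdMod η Z) {K : Set V}
    (hK : G.IsClique K) : (K \ Z).ncard ≤ η := by
  have hK' : (G.induce Zᶜ).IsClique (Subtype.val ⁻¹' K) := fun _ hu _ hv huv =>
    hK hu hv (Subtype.coe_injective.ne huv)
  have himage : Subtype.val '' (Subtype.val ⁻¹' K : Set ↥Zᶜ) = K \ Z := by
    rw [Set.image_preimage_eq_inter_range, Subtype.range_coe, Set.sdiff_eq]
  rw [← himage, Set.ncard_image_of_injective _ Subtype.val_injective]
  exact hK'.ncard_le_treedepth.trans hZ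

theorem IsTdMod.diff_union_nbhdSet [Finite V] (hZ : G.IsTdMod η Z) {S : Set V}
    (hS : (G.induce S).treedepth ≤ η) : G.IsTdMod η (Z \ S ∪ G.nbhdSet S) := by
  classical
  have hout : ∀ v ∉ Z \ S ∪ G.nbhdSet S, v ∉ S → v ∈ Zᶜ := fun v hv hvS hvZ =>
    hv (Or.inl ⟨hvZ, hvS⟩)
  let φ : G.induce (Z \ S ∪ G.nbhdSet S)ᶜ →g G.induce S ⊕g G.induce Zᶜ :=
    { toFun := fun v => if h : v.1 ∈ S then .inl ⟨v, h⟩ else .inr ⟨v, hout v v.2 h⟩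
      map_rel' := fun {u v} huv => by
        have hN : ∀ {x y : V}, x ∈ S → y ∉ S → G.Adj x y → y ∈ G.nbhdSet S := fun hx hy hxy =>
          ⟨hy, _, hx, hxy.symm⟩
        by_cases hu : u.1 ∈ S <;> by_cases hv : v.1 ∈ S <;> simp only [hu, hv, dif_pos, dif_neg,
          not_false_eq_true, sum_adj, comap_adj, Function.Embedding.subtype_apply]
        · exact huv
        · exact v.2 (Or.inr (hN hu hv huv))
        · exact u.2 (Or.inr (hN hv hu huv.symm))
        · exact huv }
  have hφ : Injective φ := fun u v huv => by
    by_cases hu : u.1 ∈ S <;> by_cases hv : v.1 ∈ S <;>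
      simp [φ, hu, hv, Subtype.ext_iff] at huv ⊢ <;> exact huv
  exact (treedepth_le_of_injective φ hφ).trans (treedepth_sum_le.trans (max_le hS hZ))

end SimpleGraph

/-- If `td(G[S]) ≤ η` and `S` is `ℓ`-nearly clique separated in `G`, then every
minimum-size treedepth-`η` modulator `Z` of `G` satisfies `|Z ∩ S| ≤ η + ℓ`. -/
theorem min_modulator_inter_nearlyCliqueSeparated {V : Type*} [Fintype V]
    (η ℓ : ℕ) (G : SimpleGraph V) (S : Set V)
    (htd : (G.induce S).treedepth ≤ η)
    (hsep : ∃ Q ⊆ G.nbhdSet S, Q.ncard ≤ ℓ ∧ G.IsClique (G.nbhdSet S \ Q))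
    (Z : Set V) (hZ : G.IsTdMod η Z)
    (hmin : ∀ Z' : Set V, G.IsTdMod η Z' → Z.ncard ≤ Z'.ncard) :
    (Z ∩ S).ncard ≤ η + ℓ := by
  obtain ⟨Q, -, hQ, hclique⟩ := hsep
  set N := G.nbhdSet S
  have hNZ : (N \ Z).ncard ≤ ℓ + η := calc
    (N \ Z).ncard ≤ (Q ∪ (N \ Q) \ Z).ncard :=
      Set.ncard_le_ncard (fun v hv => by by_cases hq : v ∈ Q <;> simp [hq, hv.1, hv.2])
    _ ≤ Q.ncard + ((N \ Q) \ Z).ncard := Set.ncard_union_le _ _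
    _ ≤ ℓ + η := add_le_add hQ (hZ.ncard_diff_le_of_isClique hclique)
  have hZ'card : (Z \ S ∪ N).ncard ≤ (Z \ S).ncard + (N \ Z).ncard := by
    refine (Set.ncard_le_ncard ?_ (Set.toFinite _)).trans (Set.ncard_union_le _ (N \ Z))
    rintro v (hv | hv)
    · exact Or.inl hv
    · by_cases hvZ : v ∈ Z
      exacts [Or.inl ⟨hvZ, hv.1⟩, Or.inr ⟨hv, hvZ⟩]
  have hZ' : Z.ncard ≤ (Z \ S ∪ N).ncard := hmin _ (hZ.diff_union_nbhdSet htd)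
  have hsplit := Set.ncard_inter_add_ncard_sdiff_eq_ncard Z S
  omega
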